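/- arXiv:2202.11242 — 3 statements merged into one kernel-verified Lean document; each statement's English description precedes it below -/
import Mathlib

section
/- Let λ > 0 be a real number and let m be a natural number with λ ≤ m. Then there exists a real number a ∈ (0, λ) such that ∑_{k=m}^{∞} e^{−λ}·λ^k/k! = e^{−a}·λ^m/m!. -/
/-!
Write the tail as `e^{-λ} T` with `T = ∑ₖ λ^{m+k}/(m+k)!`. Its first term gives `λ^m/m! < T`, and
`(m+k)! ≥ m! k!` (strict for `k = 1` when `m ≥ 1`) gives `T < (λ^m/m!) e^λ`.
Hence `y = e^{-λ} T / (λ^m/m!)` lies in `(e^{-λ}, 1)`, and `a = -log y`.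
-/

open Real
open scoped Nat

lemma pow_add_div_factorial_add_le {x : ℝ} (hx : 0 ≤ x) (m k : ℕ) :
    x ^ (m + k) / (m + k)! ≤ x ^ m / m ! * (x ^ k / k !) := by
  have hfac : (m ! * k ! : ℝ) ≤ (m + k)! := by
    exact_mod_cast Nat.le_of_dvd (Nat.factorial_pos _)
      (Nat.factorial_mul_factorial_dvd_factorial_add m k)
  rw [div_mul_div_comm, ← pow_add]
  gcongr

lemma pow_succ_div_factorial_succ_lt {x : ℝ} (hx : 0 < x) {m : ℕ} (hm : 0 < m) :
    x ^ (m + 1) / (m + 1)! < x ^ m / m ! * x := by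
  have hfac : (m ! : ℝ) < (m + 1)! := by exact_mod_cast Nat.factorial_lt_of_lt hm m.lt_succ_self
  rw [div_mul_eq_mul_div, ← pow_succ]
  gcongr

lemma summable_pow_add_div_factorial (x : ℝ) (m : ℕ) :
    Summable fun k ↦ x ^ (m + k) / (m + k)! := by
  simpa only [add_comm m] using (summable_nat_add_iff m).2 (Real.summable_pow_div_factorial x)

lemma pow_div_factorial_lt_tsum_pow_add_div_factorial {x : ℝ} (hx : 0 < x) (m : ℕ) :
    x ^ m / m ! < ∑' k, x ^ (m + k) / (m + k)! := by
  rw [(summable_pow_add_div_factorial x m).tsum_eq_zero_add, add_zero, lt_add_iff_pos_right]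
  exact ((summable_nat_add_iff 1).2 (summable_pow_add_div_factorial x m)).tsum_pos
    (fun _ ↦ by positivity) 0 (by positivity)

lemma tsum_pow_add_div_factorial_lt {x : ℝ} (hx : 0 < x) {m : ℕ} (hm : 0 < m) :
    ∑' k, x ^ (m + k) / (m + k)! < x ^ m / m ! * exp x := by
  rw [exp_eq_exp_ℝ, NormedSpace.exp_eq_tsum_div, ← tsum_mul_left]
  exact Summable.tsum_lt_tsum_of_nonneg (fun _ ↦ by positivity)
    (pow_add_div_factorial_add_le hx.le m) (i := 1)
    (by simpa using pow_succ_div_factorial_succ_lt hx hm)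
    ((Real.summable_pow_div_factorial x).mul_left _)

lemma exists_mem_Ioo_eq_exp_neg {b y : ℝ} (hb : exp (-b) < y) (hy : y < 1) :
    ∃ a ∈ Set.Ioo 0 b, y = exp (-a) := by
  have hy0 : 0 < y := (exp_pos _).trans hb
  refine ⟨-log y, ⟨neg_pos.2 (log_neg hy0 hy), ?_⟩, by rw [neg_neg, exp_log hy0]⟩
  rw [neg_lt, ← log_exp (-b)]
  exact log_lt_log (exp_pos _) hb

/-- Exact form of the Poisson tail: for `0 < λ ≤ m` there is `a ∈ (0, λ)` with
`∑_{k=m}^∞ e^{-λ} λ^k / k! = e^{-a} λ^m / m!`. -/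
theorem poisson_tail_exact_form (lam : ℝ) (hlam : 0 < lam) (m : ℕ) (hm : lam ≤ m) :
    ∃ a ∈ Set.Ioo (0 : ℝ) lam,
      (∑' k : ℕ, Real.exp (-lam) * lam ^ (m + k) / (Nat.factorial (m + k))) =
        Real.exp (-a) * lam ^ m / (Nat.factorial m) := by
  have hm0 : 0 < m := by exact_mod_cast hlam.trans_le hm
  have hp : 0 < lam ^ m / (m !) := by positivity
  have hlower := pow_div_factorial_lt_tsum_pow_add_div_factorial hlam m
  have hupper := tsum_pow_add_div_factorial_lt hlam hm0
  obtain ⟨a, ha, hya⟩ := exists_mem_Ioo_eq_exp_neg (b := lam)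
    (y := exp (-lam) * (∑' k, lam ^ (m + k) / (m + k)!) / (lam ^ m / (m !)))
    (by rw [lt_div_iff₀ hp]; exact mul_lt_mul_of_pos_left hlower (exp_pos _))
    (by rwa [div_lt_one hp, exp_neg, inv_mul_lt_iff₀ (exp_pos _), mul_comm])
  refine ⟨a, ha, ?_⟩
  rw [← hya]
  simp_rw [mul_div_assoc, tsum_mul_left]
  field_simp
end

section
/- For every real λ > 0, the sequence m ↦ ∑_{k=m}^{∞} e^{−λ}·λ^k/k! and the sequence m ↦ λ^m/m! are big-Θ of each other as m → ∞; that is, each sequence is big-O of the other along the filter atTop on the natural numbers. -/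
open Asymptotics Filter

lemma poisson_shift_summable (lam : ℝ) (m : ℕ) :
    Summable (fun k : ℕ => lam ^ (m + k) / (Nat.factorial (m + k))) :=
  (Real.summable_pow_div_factorial lam).comp_injective (add_right_injective m)

/-- For every `λ > 0`, the Poisson tail `m ↦ ∑_{k=m}^∞ e^{-λ} λ^k / k!` and the
sequence `m ↦ λ^m / m!` are big-Θ of each other as `m → ∞`. -/
theorem poisson_tail_isTheta (lam : ℝ) (hlam : 0 < lam) :
    (fun m : ℕ => ∑' k : ℕ, Real.exp (-lam) * lam ^ (m + k) / (Nat.factorial (m + k)))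
      =Θ[atTop] (fun m : ℕ => lam ^ m / (Nat.factorial m)) := by
  set C : ℝ := ∑' k : ℕ, lam ^ k / (Nat.factorial k) with hC
  have hCs := Real.summable_pow_div_factorial lam
  have hlam' : 0 ≤ lam := hlam.le
  have hterm : ∀ m k : ℕ, 0 ≤ Real.exp (-lam) * lam ^ (m + k) / (Nat.factorial (m + k)) := by
    intro m k
    positivity
  have hS : ∀ m : ℕ, Summable
      (fun k : ℕ => Real.exp (-lam) * lam ^ (m + k) / (Nat.factorial (m + k))) := by
    intro m
    simpa [mul_div_assoc] using (poisson_shift_summable lam m).mul_left (Real.exp (-lam))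
  have hTpos : ∀ m : ℕ,
      0 ≤ ∑' k : ℕ, Real.exp (-lam) * lam ^ (m + k) / (Nat.factorial (m + k)) := by
    intro m
    exact tsum_nonneg (hterm m)
  have hgpos : ∀ m : ℕ, 0 ≤ lam ^ m / (Nat.factorial m) := by
    intro m; positivity
  -- lower bound: T m ≥ exp(-lam) * (lam^m / m!)
  have hlow : ∀ m : ℕ, Real.exp (-lam) * (lam ^ m / (Nat.factorial m)) ≤
      ∑' k : ℕ, Real.exp (-lam) * lam ^ (m + k) / (Nat.factorial (m + k)) := by
    intro m
    have := Summable.le_tsum (hS m) 0 (fun k _ => hterm m k)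
    simpa [mul_div_assoc] using this
  -- upper bound: T m ≤ exp(-lam) * C * (lam^m/m!)
  have hupp : ∀ m : ℕ,
      (∑' k : ℕ, Real.exp (-lam) * lam ^ (m + k) / (Nat.factorial (m + k))) ≤
      Real.exp (-lam) * C * (lam ^ m / (Nat.factorial m)) := by
    intro m
    have hbd : ∀ k : ℕ, Real.exp (-lam) * lam ^ (m + k) / (Nat.factorial (m + k)) ≤
        Real.exp (-lam) * (lam ^ m / (Nat.factorial m)) * (lam ^ k / (Nat.factorial k)) := by
      intro k
      have hdvd : (Nat.factorial m * Nat.factorial k : ℕ) ∣ Nat.factorial (m + k) :=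
        Nat.factorial_mul_factorial_dvd_factorial_add m k
      have hfle : (Nat.factorial m * Nat.factorial k : ℝ) ≤ Nat.factorial (m + k) := by
        exact_mod_cast Nat.le_of_dvd (Nat.factorial_pos _) hdvd
      have h1 : lam ^ (m + k) / (Nat.factorial (m + k)) ≤
          lam ^ (m + k) / ((Nat.factorial m : ℝ) * Nat.factorial k) := by
        apply div_le_div_of_nonneg_left (by positivity) _ hfle
        positivity
      have h2 : lam ^ (m + k) / ((Nat.factorial m : ℝ) * Nat.factorial k) =
          (lam ^ m / (Nat.factorial m)) * (lam ^ k / (Nat.factorial k)) := by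
        rw [pow_add]; ring
      calc Real.exp (-lam) * lam ^ (m + k) / (Nat.factorial (m + k))
          = Real.exp (-lam) * (lam ^ (m + k) / (Nat.factorial (m + k))) := by ring
        _ ≤ Real.exp (-lam) * ((lam ^ m / (Nat.factorial m)) * (lam ^ k / (Nat.factorial k))) := by
            apply mul_le_mul_of_nonneg_left _ (Real.exp_nonneg _)
            rw [← h2]; exact h1
        _ = Real.exp (-lam) * (lam ^ m / (Nat.factorial m)) * (lam ^ k / (Nat.factorial k)) := by
            ring
    have hSum2 : Summable (fun k : ℕ =>
        Real.exp (-lam) * (lam ^ m / (Nat.factorial m)) * (lam ^ k / (Nat.factorial k))) :=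
      hCs.mul_left _
    calc (∑' k : ℕ, Real.exp (-lam) * lam ^ (m + k) / (Nat.factorial (m + k)))
        ≤ ∑' k : ℕ, Real.exp (-lam) * (lam ^ m / (Nat.factorial m)) * (lam ^ k / (Nat.factorial k)) :=
          Summable.tsum_le_tsum hbd (hS m) hSum2
      _ = Real.exp (-lam) * (lam ^ m / (Nat.factorial m)) * C := by
          rw [tsum_mul_left]
      _ = Real.exp (-lam) * C * (lam ^ m / (Nat.factorial m)) := by ring
  constructor
  · apply IsBigO.of_bound (Real.exp (-lam) * C)
    filter_upwards with m
    rw [Real.norm_of_nonneg (hTpos m), Real.norm_of_nonneg (hgpos m)]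
    exact hupp m
  · apply IsBigO.of_bound (Real.exp lam)
    filter_upwards with m
    rw [Real.norm_of_nonneg (hgpos m), Real.norm_of_nonneg (hTpos m)]
    have := hlow m
    have h := mul_le_mul_of_nonneg_left this (Real.exp_nonneg lam)
    calc lam ^ m / (Nat.factorial m)
        = Real.exp lam * (Real.exp (-lam) * (lam ^ m / (Nat.factorial m))) := by
          rw [← mul_assoc, ← Real.exp_add]; simp
      _ ≤ Real.exp lam * (∑' k : ℕ, Real.exp (-lam) * lam ^ (m + k) / (Nat.factorial (m + k))) := h
end

section
/- Let g : ℝ → ℝ be bounded and measurable, let x ∈ ℝ, let t < s < T be real numbers, let r_i, r_j, α_i, α_j ∈ ℝ and σ_i, σ_j > 0. Define the time-weighted averages r̄ = (r_i(s−t) + r_j(T−s))/(T−t), ᾱ = (α_i(s−t) + α_j(T−s))/(T−t), and σ̄ = √((σ_i²(s−t) + σ_j²(T−s))/(T−t)). Then ∫_ℝ e^{−r_i(s−t)}·V(x·exp((r_i−α_i−σ_i²/2)(s−t) + σ_i√(s−t)·z), r_j, σ_j, T−s, α_j) dγ(z) = V(x, r̄, σ̄, T−t, ᾱ). -/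
/-!
Under `γ`, the exponent `(r - α - σ²/2) t + σ √t z` is Gaussian with mean `(r - α - σ²/2) t` and
variance `σ² t`, so `V g x r σ t α` is the discounted expectation of `g (x eᵁ)` for such a `U`.
Running regime `i` on `[t, s]` and then regime `j` on `[s, T]` adds two independent Gaussian
exponents and multiplies the discount factors; the sum is Gaussian with the summed means and
variances (convolution of Gaussians), and the time-averaged parameters are exactly those that
reproduce the summed discount rate, mean and variance over `[t, T]`.
-/

open MeasureTheory ProbabilityTheory
open scoped NNReal

/-- The standard Gaussian measure `N(0,1)` on `ℝ`. -/
noncomputable def stdGaussian : Measure ℝ := gaussianReal 0 1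

/-- `V g x r σ t α = ∫ e^{-rt} g(x e^{(r-α-σ²/2)t + σ√t z}) dγ(z)`. -/
noncomputable def V (g : ℝ → ℝ) (x r σ t α : ℝ) : ℝ :=
  ∫ z, Real.exp (-(r * t)) *
      g (x * Real.exp ((r - α - σ ^ 2 / 2) * t + σ * Real.sqrt t * z)) ∂stdGaussian

namespace ProbabilityTheory

variable {E : Type*} [NormedAddCommGroup E] [NormedSpace ℝ E]

lemma integral_comp_affine_gaussianReal [CompleteSpace E] {μ : ℝ} {v : ℝ≥0} (m c : ℝ)
    (f : ℝ → E) :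
    ∫ z, f (m + c * z) ∂gaussianReal μ v
      = ∫ u, f u ∂gaussianReal (m + c * μ) (.mk (c ^ 2) (sq_nonneg _) * v) := by
  rcases eq_or_ne c 0 with rfl | hc
  · simp [gaussianReal_zero_var]
  let e : ℝ ≃ᵐ ℝ := (MeasurableEquiv.mulLeft₀ c hc).trans (MeasurableEquiv.addLeft m)
  have hmap : (gaussianReal μ v).map e
      = gaussianReal (m + c * μ) (.mk (c ^ 2) (sq_nonneg _) * v) := by
    rw [show (e : ℝ → ℝ) = (m + ·) ∘ (c * ·) from rfl,
      ← Measure.map_map (by fun_prop) (by fun_prop),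
      gaussianReal_map_const_mul, gaussianReal_map_const_add, add_comm]
  rw [← hmap, integral_map_equiv]
  rfl

lemma integral_integral_add_gaussianReal {m₁ m₂ : ℝ} {v₁ v₂ : ℝ≥0} {f : ℝ → E}
    (hf : Integrable f (gaussianReal (m₁ + m₂) (v₁ + v₂))) :
    ∫ x, ∫ y, f (x + y) ∂gaussianReal m₂ v₂ ∂gaussianReal m₁ v₁
      = ∫ u, f u ∂gaussianReal (m₁ + m₂) (v₁ + v₂) := by
  rw [← gaussianReal_conv_gaussianReal] at hf ⊢
  exact (integral_conv hf).symm

end ProbabilityTheory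

lemma V_eq_integral_gaussianReal (g : ℝ → ℝ) (x r σ t α : ℝ) :
    V g x r σ t α = Real.exp (-(r * t)) *
      ∫ u, g (x * Real.exp u) ∂gaussianReal ((r - α - σ ^ 2 / 2) * t) (σ ^ 2 * t).toNNReal := by
  rw [V, _root_.stdGaussian, integral_const_mul,
    integral_comp_affine_gaussianReal _ _ (fun u => g (x * Real.exp u)),
    mul_zero, add_zero, mul_one]
  congr 3
  ext
  rw [NNReal.coe_mk, mul_pow, Real.coe_toNNReal']
  -- for `t < 0` both variances vanish: `√t = 0` and `toNNReal` truncates at `0`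
  rcases le_or_gt 0 t with ht | ht
  · rw [Real.sq_sqrt ht, max_eq_left (by positivity)]
  · rw [Real.sqrt_eq_zero'.mpr ht.le, max_eq_right (by nlinarith)]
    ring

theorem one_switching_identity_general (g : ℝ → ℝ) (hg : Measurable g) (hbdd : ∃ C, ∀ y, |g y| ≤ C)
    (x t s T ri rj αi αj σi σj : ℝ) (hts : t < s) (hsT : s < T) :
    (∫ z, Real.exp (-(ri * (s - t))) *
        V g (x * Real.exp ((ri - αi - σi ^ 2 / 2) * (s - t) + σi * Real.sqrt (s - t) * z))
          rj σj (T - s) αj ∂stdGaussian)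
    = V g x ((ri * (s - t) + rj * (T - s)) / (T - t))
        (Real.sqrt ((σi ^ 2 * (s - t) + σj ^ 2 * (T - s)) / (T - t)))
        (T - t)
        ((αi * (s - t) + αj * (T - s)) / (T - t)) := by
  obtain ⟨C, hC⟩ := hbdd
  have hst : 0 ≤ s - t := by linarith
  have hTs : 0 ≤ T - s := by linarith
  have htT : 0 < T - t := by linarith
  have hint : ∀ μ v, Integrable (fun u => g (x * Real.exp u)) (gaussianReal μ v) := fun _ _ =>
    .of_bound (hg.comp (by fun_prop)).aestronglyMeasurable C (ae_of_all _ fun _ => hC _)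
  have hvar : √((σi ^ 2 * (s - t) + σj ^ 2 * (T - s)) / (T - t)) ^ 2 * (T - t)
      = σi ^ 2 * (s - t) + σj ^ 2 * (T - s) := by
    rw [Real.sq_sqrt (by positivity), div_mul_cancel₀ _ htT.ne']
  simp_rw [V_eq_integral_gaussianReal, mul_assoc x, ← Real.exp_add]
  rw [integral_const_mul, integral_const_mul, _root_.stdGaussian,
    integral_comp_affine_gaussianReal _ _ (fun w => ∫ u, g (x * Real.exp (w + u)) ∂_),
    integral_integral_add_gaussianReal (hint _ _), ← mul_assoc, ← Real.exp_add]
  congr 2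
  · field_simp
    ring
  congr 1
  · rw [Real.sq_sqrt (by positivity)]
    field_simp
    ring
  · rw [hvar, Real.toNNReal_add (by positivity) (by positivity)]
    congr 1
    ext
    rw [NNReal.coe_mul, NNReal.coe_mk, NNReal.coe_one, mul_one, mul_pow, Real.sq_sqrt hst,
      Real.coe_toNNReal _ (by positivity)]

/-- One-switching identity: the discounted Gaussian average over `[t,s]` of the regime-`j`
value `V` at time `s` equals `V` with time-averaged parameters over `[t,T]`. -/
theorem one_switching_identity (g : ℝ → ℝ) (hg : Measurable g) (hbdd : ∃ C, ∀ y, |g y| ≤ C)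
    (x t s T ri rj αi αj σi σj : ℝ) (hts : t < s) (hsT : s < T)
    (hσi : 0 < σi) (hσj : 0 < σj) :
    (∫ z, Real.exp (-(ri * (s - t))) *
        V g (x * Real.exp ((ri - αi - σi ^ 2 / 2) * (s - t) + σi * Real.sqrt (s - t) * z))
          rj σj (T - s) αj ∂stdGaussian)
    = V g x ((ri * (s - t) + rj * (T - s)) / (T - t))
        (Real.sqrt ((σi ^ 2 * (s - t) + σj ^ 2 * (T - s)) / (T - t)))
        (T - t)
        ((αi * (s - t) + αj * (T - s)) / (T - t)) :=
  one_switching_identity_general g hg hbdd x t s T ri rj αi αj σi σj hts hsT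
end
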